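/- arXiv:2511.12123 — 4 statements merged into one kernel-verified Lean document; each statement's English description precedes it below -/
import Mathlib

section
/- Let K ≥ 1, let N ≥ 1, and for each l : Fin N let 𝒜_l be a finite nonempty type. Let w, w̄ : Fin K → ℝ be strictly positive probability mass functions on Fin K, and for each j : Fin K and each l : Fin N let π_{j,l}, π̄_{j,l} : 𝒜_l → ℝ be strictly positive probability mass functions on 𝒜_l. Define the mixture-of-products distributions on Π_{l} 𝒜_l by m(a) := ∑_{j} w_j · ∏_{l} π_{j,l}(a l) and m̄(a) := ∑_{j} w̄_j · ∏_{l} π̄_{j,l}(a l). Then D_KL(m, m̄) ≤ D_KL(w, w̄) + ∑_{j} w_j · ∑_{l} D_KL(π_{j,l}, π̄_{j,l}). -/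
/-!
With `P j a = ∏ l, π j l (a l)`, the two mixtures are sums over `j` of `w j * P j` and
`wb j * Pb j`. The log-sum inequality, applied at each point, makes `KL` jointly convex, so
`KL m mb ≤ ∑ j, KL (w j * P j) (wb j * Pb j)`. Each term equals
`w j * log (w j / wb j) + w j * KL (P j) (Pb j)` because `P j` is normalized, and the KL divergence
of product distributions is the sum of the KL divergences of the factors.
-/

open Finset

/-- The Kullback–Leibler divergence between two positive probability mass
functions on a finite type. -/
noncomputable def KL {X : Type*} [Fintype X] (p q : X → ℝ) : ℝ :=
  ∑ x, p x * Real.log (p x / q x)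

/-- The log-sum inequality: Jensen's inequality for `x ↦ x log x` with weights `b i / ∑ b` at
the points `a i / b i`. -/
theorem sum_mul_log_div_sum_le {ι : Type*} (s : Finset ι) (a b : ι → ℝ)
    (ha : ∀ i ∈ s, 0 ≤ a i) (hb : ∀ i ∈ s, 0 < b i) :
    (∑ i ∈ s, a i) * Real.log ((∑ i ∈ s, a i) / ∑ i ∈ s, b i) ≤
      ∑ i ∈ s, a i * Real.log (a i / b i) := by
  rcases s.eq_empty_or_nonempty with rfl | hs
  · simp
  set B := ∑ i ∈ s, b i
  have hB : 0 < B := sum_pos hb hs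
  have jensen := Real.convexOn_mul_log.map_sum_le (t := s) (w := fun i => b i / B)
    (p := fun i => a i / b i) (fun i hi => (div_pos (hb i hi) hB).le)
    (by rw [← sum_div, div_self hB.ne']) (fun i hi => div_nonneg (ha i hi) (hb i hi).le)
  have hmean : ∑ i ∈ s, (b i / B) • (a i / b i) = (∑ i ∈ s, a i) / B := by
    rw [sum_div]
    exact sum_congr rfl fun i hi => by simp only [smul_eq_mul]; field_simp [(hb i hi).ne']
  have hterm : ∀ i ∈ s, (b i / B) • (a i / b i * Real.log (a i / b i)) =
      a i * Real.log (a i / b i) / B := fun i hi => by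
    simp only [smul_eq_mul]; field_simp [(hb i hi).ne']
  rw [hmean, sum_congr rfl hterm, ← sum_div, div_mul_eq_mul_div,
    div_le_div_iff_of_pos_right hB] at jensen
  exact jensen

theorem KL_sum_le_sum_KL {ι X : Type*} [Fintype ι] [Fintype X] (p q : ι → X → ℝ)
    (hp : ∀ i x, 0 ≤ p i x) (hq : ∀ i x, 0 < q i x) :
    KL (fun x => ∑ i, p i x) (fun x => ∑ i, q i x) ≤ ∑ i, KL (p i) (q i) := by
  unfold KL
  rw [sum_comm]
  exact sum_le_sum fun x _ =>
    sum_mul_log_div_sum_le _ _ _ (fun i _ => hp i x) (fun i _ => hq i x)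

theorem KL_const_mul {X : Type*} [Fintype X] {c d : ℝ} (hc : 0 < c) (hd : 0 < d)
    (p q : X → ℝ) (hp : ∀ x, 0 < p x) (hq : ∀ x, 0 < q x) (hp1 : ∑ x, p x = 1) :
    KL (fun x => c * p x) (fun x => d * q x) = c * Real.log (c / d) + c * KL p q := by
  have hsplit : ∀ x, Real.log (c * p x / (d * q x)) = Real.log (c / d) + Real.log (p x / q x) :=
    fun x => by
      rw [mul_div_mul_comm, Real.log_mul (div_pos hc hd).ne' (div_pos (hp x) (hq x)).ne']
  unfold KL
  simp only [hsplit, mul_add, sum_add_distrib, ← sum_mul, hp1, mul_assoc, ← mul_sum, one_mul]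

section ProductDistribution

variable {ι : Type*} [Fintype ι] [DecidableEq ι] {α : ι → Type*} [∀ i, Fintype (α i)]

theorem sum_prod_eq_one (p : ∀ i, α i → ℝ) (hp1 : ∀ i, ∑ x, p i x = 1) :
    ∑ a : ∀ i, α i, ∏ i, p i (a i) = 1 := by
  rw [← Fintype.prod_sum]
  simp [hp1]

theorem sum_prod_mul_apply (p g : ∀ i, α i → ℝ) (hp1 : ∀ i, ∑ x, p i x = 1) (i : ι) :
    ∑ a : ∀ i, α i, (∏ j, p j (a j)) * g i (a i) = ∑ x, p i x * g i x := by
  have hfactor : ∀ a : ∀ i, α i, (∏ j, p j (a j)) * g i (a i) =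
      ∏ j, p j (a j) * (if j = i then g j (a j) else 1) := fun a => by
    rw [prod_mul_distrib, prod_ite_eq' univ i]
    simp
  rw [sum_congr rfl fun a _ => hfactor a,
    ← Fintype.prod_sum fun j x => p j x * if j = i then g j x else 1]
  simp only [mul_ite, mul_one, sum_ite_irrel, hp1, prod_ite_eq', mem_univ, if_true]

theorem KL_pi (p q : ∀ i, α i → ℝ) (hp : ∀ i x, 0 < p i x) (hq : ∀ i x, 0 < q i x)
    (hp1 : ∀ i, ∑ x, p i x = 1) :
    KL (fun a : ∀ i, α i => ∏ i, p i (a i)) (fun a => ∏ i, q i (a i)) = ∑ i, KL (p i) (q i) := by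
  have hsplit : ∀ a : ∀ i, α i,
      Real.log ((∏ i, p i (a i)) / ∏ i, q i (a i)) = ∑ i, Real.log (p i (a i) / q i (a i)) :=
    fun a => by
      rw [← prod_div_distrib, Real.log_prod fun i _ => (div_pos (hp i (a i)) (hq i (a i))).ne']
  unfold KL
  simp only [hsplit, mul_sum]
  rw [sum_comm]
  exact sum_congr rfl fun i _ => sum_prod_mul_apply p (fun i x => Real.log (p i x / q i x)) hp1 i

end ProductDistribution

theorem kl_mixture_of_products_le_general
    (K : ℕ) (N : ℕ) (𝒜 : Fin N → Type*) [∀ l, Fintype (𝒜 l)]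
    (w wb : Fin K → ℝ) (π πb : Fin K → ∀ l, 𝒜 l → ℝ)
    (hw : ∀ j, 0 < w j) (hwb : ∀ j, 0 < wb j)
    (hπ : ∀ j l x, 0 < π j l x) (hπ1 : ∀ j l, ∑ x, π j l x = 1)
    (hπb : ∀ j l x, 0 < πb j l x) :
    KL (fun a : ∀ l, 𝒜 l => ∑ j, w j * ∏ l, π j l (a l))
        (fun a : ∀ l, 𝒜 l => ∑ j, wb j * ∏ l, πb j l (a l))
      ≤ KL w wb + ∑ j, w j * ∑ l, KL (π j l) (πb j l) := by
  have hP : ∀ j (a : ∀ l, 𝒜 l), 0 < ∏ l, π j l (a l) := fun j a => prod_pos fun l _ => hπ j l (a l)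
  have hPb : ∀ j (a : ∀ l, 𝒜 l), 0 < ∏ l, πb j l (a l) :=
    fun j a => prod_pos fun l _ => hπb j l (a l)
  calc _ ≤ ∑ j, KL (fun a : ∀ l, 𝒜 l => w j * ∏ l, π j l (a l))
          (fun a => wb j * ∏ l, πb j l (a l)) :=
        KL_sum_le_sum_KL _ _ (fun j a => (mul_pos (hw j) (hP j a)).le)
          (fun j a => mul_pos (hwb j) (hPb j a))
    _ = ∑ j, (w j * Real.log (w j / wb j) + w j * ∑ l, KL (π j l) (πb j l)) :=
        sum_congr rfl fun j _ => by
          rw [KL_const_mul (hw j) (hwb j) _ _ (hP j) (hPb j) (sum_prod_eq_one (π j) (hπ1 j)),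
            KL_pi (π j) (πb j) (hπ j) (hπb j) (hπ1 j)]
    _ = KL w wb + ∑ j, w j * ∑ l, KL (π j l) (πb j l) := sum_add_distrib

/-- KL divergence between two mixtures of product distributions is bounded by
the KL divergence of the mixture weights plus the averaged sums of the
KL divergences of the individual factors. -/
theorem kl_mixture_of_products_le
    (K : ℕ) (hK : 1 ≤ K) (N : ℕ) (hN : 1 ≤ N) (𝒜 : Fin N → Type*)
    [∀ l, Fintype (𝒜 l)] [∀ l, Nonempty (𝒜 l)]
    (w wb : Fin K → ℝ) (π πb : Fin K → ∀ l, 𝒜 l → ℝ)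
    (hw : ∀ j, 0 < w j) (hw1 : ∑ j, w j = 1)
    (hwb : ∀ j, 0 < wb j) (hwb1 : ∑ j, wb j = 1)
    (hπ : ∀ j l x, 0 < π j l x) (hπ1 : ∀ j l, ∑ x, π j l x = 1)
    (hπb : ∀ j l x, 0 < πb j l x) (hπb1 : ∀ j l, ∑ x, πb j l x = 1) :
    KL (fun a : ∀ l, 𝒜 l => ∑ j, w j * ∏ l, π j l (a l))
        (fun a : ∀ l, 𝒜 l => ∑ j, wb j * ∏ l, πb j l (a l))
      ≤ KL w wb + ∑ j, w j * ∑ l, KL (π j l) (πb j l) :=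
  kl_mixture_of_products_le_general K N 𝒜 w wb π πb hw hwb hπ hπ1 hπb
end

section
/- (Conditional Advantage Decomposition) Let N ≥ 1, let 𝒜_1, …, 𝒜_N be finite nonempty types with probability mass functions π_l on 𝒜_l, and let Q : (Π_{l=1}^N 𝒜_l) → ℝ. Then for every n with 1 ≤ n ≤ N and every tuple a^{1:n} ∈ 𝒜_1 × ⋯ × 𝒜_n: A^{1:n}(a^{1:n}) = ∑_{l=1}^{n} A^{l}(a^{1:l−1}, a^{l}). -/
open Finset

/-- The partial Q-function `Q^{1:m}`: the expectation of `Q` over the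
coordinates with index `≥ m` (the "completions"), drawn independently from the
policies `π`, with the coordinates of index `< m` fixed to those of `a`.
It only depends on the first `m` coordinates of `a`. -/
noncomputable def Qpart {N : ℕ} {𝒜 : Fin N → Type*} [∀ l, Fintype (𝒜 l)]
    (π : ∀ l, 𝒜 l → ℝ) (Q : (∀ l, 𝒜 l) → ℝ) (m : ℕ) (a : ∀ l, 𝒜 l) : ℝ :=
  ∑ b : ∀ l : {l : Fin N // m ≤ (l : ℕ)}, 𝒜 l.1,
    (∏ l : {l : Fin N // m ≤ (l : ℕ)}, π l.1 (b l)) *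
      Q (fun l => if h : m ≤ (l : ℕ) then b ⟨l, h⟩ else a l)

/-- (Conditional Advantage Decomposition) The multi-agent advantage
`A^{1:n}(a^{1:n}) = Q^{1:n}(a^{1:n}) − Q^{1:0}` decomposes into the sum of the
individual advantages `A^{l}(a^{1:l−1}, a^{l}) = Q^{1:l}(a^{1:l}) − Q^{1:l−1}(a^{1:l−1})`. -/
theorem conditional_advantage_decomposition
    (N : ℕ) (hN : 1 ≤ N) (𝒜 : Fin N → Type*)
    [∀ l, Fintype (𝒜 l)] [∀ l, Nonempty (𝒜 l)]
    (π : ∀ l, 𝒜 l → ℝ)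
    (hπ0 : ∀ l x, 0 ≤ π l x) (hπ1 : ∀ l, ∑ x, π l x = 1)
    (Q : (∀ l, 𝒜 l) → ℝ)
    (n : ℕ) (hn1 : 1 ≤ n) (hnN : n ≤ N)
    (a : ∀ l, 𝒜 l) :
    Qpart π Q n a - Qpart π Q 0 a
      = ∑ l ∈ Finset.range n, (Qpart π Q (l + 1) a - Qpart π Q l a) := by
  exact (Finset.sum_range_sub (fun l => Qpart π Q l a) n).symm
end

section
/- Let N ≥ 1, let 𝒜_1, …, 𝒜_N be finite nonempty types, let π_l and π̄_l be probability mass functions on 𝒜_l for each l, and let Q : (Π_{l=1}^N 𝒜_l) → ℝ. Then the expected joint advantage under the new product policy decomposes into a sum of sequential surrogate terms: ∑_{a} (∏_{l=1}^{N} π̄_l(a^{l})) · (Q(a) − Q^{1:0}) = ∑_{l=1}^{N} ∑_{a^{1:l}} (∏_{r=1}^{l} π̄_r(a^r)) · A^{l}(a^{1:l−1}, a^{l}), where the partial Q-functions and individual advantages A^{l} are defined under the family (π_l). -/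
open Finset

lemma sum_prod_pi {ι : Type*} [Fintype ι] [DecidableEq ι] {𝒜 : ι → Type*}
    [∀ i, Fintype (𝒜 i)] (g : ∀ i, 𝒜 i → ℝ) :
    ∑ a : ∀ i, 𝒜 i, ∏ i, g i (a i) = ∏ i, ∑ x, g i x := by
  rw [Finset.prod_univ_sum, Fintype.piFinset_univ]

lemma key {N : ℕ} {𝒜 : Fin N → Type*} [∀ l, Fintype (𝒜 l)]
    (π : ∀ l, 𝒜 l → ℝ) (Q : (∀ l, 𝒜 l) → ℝ) (m : ℕ)
    (g : ∀ l, 𝒜 l → ℝ) (hg : ∀ l, ∑ x, g l x = 1) :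
    ∑ a : ∀ r, 𝒜 r, (∏ r, g r (a r)) * Qpart π Q m a
      = ∑ a : ∀ r, 𝒜 r,
          (∏ r : Fin N, if m ≤ (r : ℕ) then π r (a r) else g r (a r)) * Q a := by
  classical
  set E := (Equiv.piEquivPiSubtypeProd (fun l : Fin N => m ≤ (l : ℕ)) 𝒜).symm with hEdef
  have hE : ∀ (u : ∀ i : {x : Fin N // m ≤ (x : ℕ)}, 𝒜 i)
      (v : ∀ i : {x : Fin N // ¬ m ≤ (x : ℕ)}, 𝒜 i) (l : Fin N),
      E (u, v) l = if h : m ≤ (l : ℕ) then u ⟨l, h⟩ else v ⟨l, h⟩ := fun _ _ _ => rfl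
  have hprod : ∀ (h : ∀ l, 𝒜 l → ℝ) u v,
      (∏ r, h r (E (u, v) r))
        = (∏ i : {x : Fin N // m ≤ (x : ℕ)}, h i.1 (u i))
            * (∏ i : {x : Fin N // ¬ m ≤ (x : ℕ)}, h i.1 (v i)) := by
    intro h u v
    rw [← Fintype.prod_subtype_mul_prod_subtype (fun l : Fin N => m ≤ (l : ℕ))
      (fun r => h r (E (u, v) r))]
    congr 1
    · exact Fintype.prod_congr _ _ fun i => by rw [hE, dif_pos i.2]
    · exact Fintype.prod_congr _ _ fun i => by rw [hE, dif_neg i.2]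
  have hQpart : ∀ u v, Qpart π Q m (E (u, v))
      = ∑ b : ∀ i : {x : Fin N // m ≤ (x : ℕ)}, 𝒜 i,
          (∏ i : {x : Fin N // m ≤ (x : ℕ)}, π i.1 (b i)) * Q (E (b, v)) := by
    intro u v
    simp only [Qpart]
    refine Finset.sum_congr rfl fun b _ => ?_
    have heq : (fun l : Fin N => if h : m ≤ (l : ℕ) then b ⟨l, h⟩ else E (u, v) l)
        = E (b, v) := by
      funext l
      by_cases h : m ≤ (l : ℕ) <;> simp [hE, h]
    rw [heq]
  have hone : (∑ u : ∀ i : {x : Fin N // m ≤ (x : ℕ)}, 𝒜 i,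
      ∏ i : {x : Fin N // m ≤ (x : ℕ)}, g i.1 (u i)) = 1 := by
    rw [sum_prod_pi]
    simp [hg]
  rw [← Equiv.sum_comp E (fun a => (∏ r, g r (a r)) * Qpart π Q m a),
    ← Equiv.sum_comp E (fun a =>
      (∏ r : Fin N, if m ≤ (r : ℕ) then π r (a r) else g r (a r)) * Q a),
    Fintype.sum_prod_type, Fintype.sum_prod_type]
  have step1 : ∑ u : ∀ i : {x : Fin N // m ≤ (x : ℕ)}, 𝒜 i,
        ∑ v : ∀ i : {x : Fin N // ¬ m ≤ (x : ℕ)}, 𝒜 i,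
          (∏ r, g r (E (u, v) r)) * Qpart π Q m (E (u, v))
      = ∑ v : ∀ i : {x : Fin N // ¬ m ≤ (x : ℕ)}, 𝒜 i,
          ((∏ i : {x : Fin N // ¬ m ≤ (x : ℕ)}, g i.1 (v i)) *
            ∑ b : ∀ i : {x : Fin N // m ≤ (x : ℕ)}, 𝒜 i,
              (∏ i : {x : Fin N // m ≤ (x : ℕ)}, π i.1 (b i)) * Q (E (b, v))) := by
    rw [← one_mul (∑ v : ∀ i : {x : Fin N // ¬ m ≤ (x : ℕ)}, 𝒜 i,
          ((∏ i : {x : Fin N // ¬ m ≤ (x : ℕ)}, g i.1 (v i)) *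
            ∑ b : ∀ i : {x : Fin N // m ≤ (x : ℕ)}, 𝒜 i,
              (∏ i : {x : Fin N // m ≤ (x : ℕ)}, π i.1 (b i)) * Q (E (b, v)))),
      ← hone, Finset.sum_mul]
    refine Finset.sum_congr rfl fun u _ => ?_
    rw [Finset.mul_sum]
    refine Finset.sum_congr rfl fun v _ => ?_
    rw [hprod, hQpart u v, mul_assoc]
  have step2 : ∑ u : ∀ i : {x : Fin N // m ≤ (x : ℕ)}, 𝒜 i,
        ∑ v : ∀ i : {x : Fin N // ¬ m ≤ (x : ℕ)}, 𝒜 i,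
          (∏ r : Fin N, if m ≤ (r : ℕ) then π r (E (u, v) r) else g r (E (u, v) r))
            * Q (E (u, v))
      = ∑ v : ∀ i : {x : Fin N // ¬ m ≤ (x : ℕ)}, 𝒜 i,
          ((∏ i : {x : Fin N // ¬ m ≤ (x : ℕ)}, g i.1 (v i)) *
            ∑ b : ∀ i : {x : Fin N // m ≤ (x : ℕ)}, 𝒜 i,
              (∏ i : {x : Fin N // m ≤ (x : ℕ)}, π i.1 (b i)) * Q (E (b, v))) := by
    rw [Finset.sum_comm]
    refine Finset.sum_congr rfl fun v _ => ?_
    rw [Finset.mul_sum]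
    refine Finset.sum_congr rfl fun b _ => ?_
    rw [hprod (fun r x => if m ≤ (r : ℕ) then π r x else g r x) b v]
    have h1 : (∏ i : {x : Fin N // m ≤ (x : ℕ)},
        if m ≤ (i.1 : ℕ) then π i.1 (b i) else g i.1 (b i))
        = ∏ i : {x : Fin N // m ≤ (x : ℕ)}, π i.1 (b i) :=
      Fintype.prod_congr _ _ fun i => if_pos i.2
    have h2 : (∏ i : {x : Fin N // ¬ m ≤ (x : ℕ)},
        if m ≤ (i.1 : ℕ) then π i.1 (v i) else g i.1 (v i))
        = ∏ i : {x : Fin N // ¬ m ≤ (x : ℕ)}, g i.1 (v i) :=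
      Fintype.prod_congr _ _ fun i => if_neg i.2
    rw [h1, h2]
    ring
  rw [step1, step2]

/-- The expected joint advantage under the new product policy `π̄` decomposes
into a sum of sequential surrogate terms.  Each surrogate term for agent
`l+1` sums, over partial tuples `a^{1:l+1}` weighted by `∏_{r ≤ l} π̄_r(a^r)`,
the individual advantage `A^{l+1}(a^{1:l}, a^{l+1})`; it is realized here as an
expectation over full tuples, with the remaining coordinates (on which the
advantage does not depend) marginalized out under `π_r`. -/
theorem expected_advantage_decomposition
    (N : ℕ) (hN : 1 ≤ N) (𝒜 : Fin N → Type*)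
    [∀ l, Fintype (𝒜 l)] [∀ l, Nonempty (𝒜 l)]
    (π πb : ∀ l, 𝒜 l → ℝ)
    (hπ0 : ∀ l x, 0 ≤ π l x) (hπ1 : ∀ l, ∑ x, π l x = 1)
    (hπb0 : ∀ l x, 0 ≤ πb l x) (hπb1 : ∀ l, ∑ x, πb l x = 1)
    (Q : (∀ l, 𝒜 l) → ℝ) :
    ∑ a : ∀ r, 𝒜 r, (∏ r, πb r (a r)) * (Q a - Qpart π Q 0 a)
      = ∑ l ∈ Finset.range N, ∑ a : ∀ r, 𝒜 r,
          (∏ r : Fin N, if (r : ℕ) ≤ l then πb r (a r) else π r (a r)) *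
            (Qpart π Q (l + 1) a - Qpart π Q l a) := by
  classical
  set W : ℕ → ℝ := fun m => ∑ a : ∀ r, 𝒜 r,
    (∏ r : Fin N, if m ≤ (r : ℕ) then π r (a r) else πb r (a r)) * Q a with hW
  have hterm : ∀ l, (∑ a : ∀ r, 𝒜 r,
      (∏ r : Fin N, if (r : ℕ) ≤ l then πb r (a r) else π r (a r)) *
        (Qpart π Q (l + 1) a - Qpart π Q l a)) = W (l + 1) - W l := by
    intro l
    set g : ∀ r : Fin N, 𝒜 r → ℝ := fun r x => if (r : ℕ) ≤ l then πb r x else π r x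
      with hgdef
    have hg : ∀ r, ∑ x, g r x = 1 := by
      intro r
      by_cases h : (r : ℕ) ≤ l <;> simp only [hgdef, h, if_true, if_false] <;>
        [exact hπb1 r; exact hπ1 r]
    have hgw : ∀ a : ∀ r, 𝒜 r,
        (∏ r : Fin N, if (r : ℕ) ≤ l then πb r (a r) else π r (a r)) = ∏ r, g r (a r) :=
      fun a => rfl
    have h1 : ∑ a : ∀ r, 𝒜 r, (∏ r, g r (a r)) * Qpart π Q (l + 1) a = W (l + 1) := by
      rw [key π Q (l + 1) g hg, hW]
      refine Finset.sum_congr rfl fun a _ => ?_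
      congr 1
      refine Fintype.prod_congr _ _ fun r => ?_
      simp only [g]
      split_ifs <;> first | rfl | omega
    have h2 : ∑ a : ∀ r, 𝒜 r, (∏ r, g r (a r)) * Qpart π Q l a = W l := by
      rw [key π Q l g hg, hW]
      refine Finset.sum_congr rfl fun a _ => ?_
      congr 1
      refine Fintype.prod_congr _ _ fun r => ?_
      simp only [g]
      split_ifs <;> first | rfl | omega
    calc ∑ a : ∀ r, 𝒜 r,
          (∏ r : Fin N, if (r : ℕ) ≤ l then πb r (a r) else π r (a r)) *
            (Qpart π Q (l + 1) a - Qpart π Q l a)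
        = ∑ a : ∀ r, 𝒜 r, ((∏ r, g r (a r)) * Qpart π Q (l + 1) a
            - (∏ r, g r (a r)) * Qpart π Q l a) := by
          refine Finset.sum_congr rfl fun a _ => ?_
          rw [hgw a, mul_sub]
      _ = W (l + 1) - W l := by rw [Finset.sum_sub_distrib, h1, h2]
  have hWN : W N = ∑ a : ∀ r, 𝒜 r, (∏ r, πb r (a r)) * Q a := by
    rw [hW]
    refine Finset.sum_congr rfl fun a _ => ?_
    congr 1
    refine Fintype.prod_congr _ _ fun r => ?_
    split_ifs <;> first | rfl | omega
  have hW0 : ∑ a : ∀ r, 𝒜 r, (∏ r, πb r (a r)) * Qpart π Q 0 a = W 0 := by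
    rw [key π Q 0 πb hπb1, hW]
  calc ∑ a : ∀ r, 𝒜 r, (∏ r, πb r (a r)) * (Q a - Qpart π Q 0 a)
      = ∑ a : ∀ r, 𝒜 r, ((∏ r, πb r (a r)) * Q a - (∏ r, πb r (a r)) * Qpart π Q 0 a) := by
        refine Finset.sum_congr rfl fun a _ => mul_sub _ _ _
    _ = W N - W 0 := by rw [Finset.sum_sub_distrib, hWN, hW0]
    _ = ∑ l ∈ Finset.range N, (W (l + 1) - W l) := (Finset.sum_range_sub W N).symm
    _ = _ := Finset.sum_congr rfl fun l _ => (hterm l).symm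
end

section
/- (Performance difference) Let a finite discounted MDP with initial distribution d₀ be given, and let μ and μ̄ be two joint policies. Then J(μ̄) = J(μ) + ∑_{t=0}^{∞} γ^t ∑_{s} ∑_{a} d^{μ̄}_t(s) · μ̄(s,a) · A_μ(s,a), where d^{μ̄}_t is the state-distribution sequence generated by μ̄ from d₀ and A_μ is the advantage function of μ; the series on the right converges absolutely. -/
open Finset

noncomputable section

variable {S 𝒜 : Type*}

/-- The state-distribution sequence generated by policy `μ` from the initial
distribution `d₀` in the MDP with transition function `P`. -/
def dseq [Fintype S] [Fintype 𝒜] (P : S → 𝒜 → S → ℝ) (μ : S → 𝒜 → ℝ)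
    (d₀ : S → ℝ) : ℕ → S → ℝ
  | 0 => d₀
  | t + 1 => fun s' => ∑ s, ∑ a, dseq P μ d₀ t s * μ s a * P s a s'

/-- The expected discounted return of policy `μ` from initial distribution `d₀`,
in the MDP with transitions `P`, rewards `r` and discount `γ`. -/
def Jret [Fintype S] [Fintype 𝒜] (P : S → 𝒜 → S → ℝ) (r : S → 𝒜 → ℝ) (γ : ℝ)
    (μ : S → 𝒜 → ℝ) (d₀ : S → ℝ) : ℝ :=
  ∑' t : ℕ, γ ^ t * ∑ s, ∑ a, dseq P μ d₀ t s * μ s a * r s a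

/-- The value function of `μ`: the return from the Dirac mass at `s`. -/
def Vfun [Fintype S] [Fintype 𝒜] [DecidableEq S] (P : S → 𝒜 → S → ℝ)
    (r : S → 𝒜 → ℝ) (γ : ℝ) (μ : S → 𝒜 → ℝ) (s : S) : ℝ :=
  Jret P r γ μ (fun s' => if s' = s then 1 else 0)

/-- The state-action value function of `μ`. -/
def Qfun [Fintype S] [Fintype 𝒜] [DecidableEq S] (P : S → 𝒜 → S → ℝ)
    (r : S → 𝒜 → ℝ) (γ : ℝ) (μ : S → 𝒜 → ℝ) (s : S) (a : 𝒜) : ℝ :=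
  r s a + γ * ∑ s', P s a s' * Vfun P r γ μ s'

/-- The advantage function of `μ`. -/
def Adv [Fintype S] [Fintype 𝒜] [DecidableEq S] (P : S → 𝒜 → S → ℝ)
    (r : S → 𝒜 → ℝ) (γ : ℝ) (μ : S → 𝒜 → ℝ) (s : S) (a : 𝒜) : ℝ :=
  Qfun P r γ μ s a - Vfun P r γ μ s

section Aux

variable [Fintype S] [Fintype 𝒜]
variable {P : S → 𝒜 → S → ℝ} {μ : S → 𝒜 → ℝ} {d₀ : S → ℝ} {γ : ℝ}

lemma dseq_nonneg (hP0 : ∀ s a s', 0 ≤ P s a s') (hμ0 : ∀ s a, 0 ≤ μ s a)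
    (hd0 : ∀ s, 0 ≤ d₀ s) : ∀ t s, 0 ≤ dseq P μ d₀ t s := by
  intro t
  induction t with
  | zero => exact hd0
  | succ t ih =>
    intro s'
    exact Finset.sum_nonneg fun s _ => Finset.sum_nonneg fun a _ =>
      mul_nonneg (mul_nonneg (ih s) (hμ0 s a)) (hP0 s a s')

lemma dseq_sum_one (hP1 : ∀ s a, ∑ s', P s a s' = 1) (hμ1 : ∀ s, ∑ a, μ s a = 1)
    (hd1 : ∑ s, d₀ s = 1) : ∀ t, ∑ s, dseq P μ d₀ t s = 1 := by
  intro t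
  induction t with
  | zero => exact hd1
  | succ t ih =>
    show ∑ s', ∑ s, ∑ a, dseq P μ d₀ t s * μ s a * P s a s' = 1
    rw [Finset.sum_comm]
    calc ∑ s, ∑ s', ∑ a, dseq P μ d₀ t s * μ s a * P s a s'
        = ∑ s, ∑ a, ∑ s', dseq P μ d₀ t s * μ s a * P s a s' := by
          exact Finset.sum_congr rfl fun s _ => Finset.sum_comm
      _ = ∑ s, ∑ a, dseq P μ d₀ t s * μ s a := by
          refine Finset.sum_congr rfl fun s _ => Finset.sum_congr rfl fun a _ => ?_
          rw [← Finset.mul_sum, hP1, mul_one]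
      _ = ∑ s, dseq P μ d₀ t s := by
          refine Finset.sum_congr rfl fun s _ => ?_
          rw [← Finset.mul_sum, hμ1, mul_one]
      _ = 1 := ih

lemma dseq_le_one (hP0 : ∀ s a s', 0 ≤ P s a s') (hP1 : ∀ s a, ∑ s', P s a s' = 1)
    (hμ0 : ∀ s a, 0 ≤ μ s a) (hμ1 : ∀ s, ∑ a, μ s a = 1)
    (hd0 : ∀ s, 0 ≤ d₀ s) (hd1 : ∑ s, d₀ s = 1) :
    ∀ t s, dseq P μ d₀ t s ≤ 1 := by
  intro t s
  calc dseq P μ d₀ t s ≤ ∑ s', dseq P μ d₀ t s' :=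
        Finset.single_le_sum (fun s' _ => dseq_nonneg hP0 hμ0 hd0 t s') (Finset.mem_univ s)
    _ = 1 := dseq_sum_one hP1 hμ1 hd1 t

/-- bound on the inner double sum with weights `w`. -/
lemma inner_abs_le (hP0 : ∀ s a s', 0 ≤ P s a s') (hP1 : ∀ s a, ∑ s', P s a s' = 1)
    (hμ0 : ∀ s a, 0 ≤ μ s a) (hμ1 : ∀ s, ∑ a, μ s a = 1)
    (hd0 : ∀ s, 0 ≤ d₀ s) (hd1 : ∑ s, d₀ s = 1) (f : S → 𝒜 → ℝ) (t : ℕ) :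
    |∑ s, ∑ a, dseq P μ d₀ t s * μ s a * f s a| ≤ ∑ s, ∑ a, |f s a| := by
  calc |∑ s, ∑ a, dseq P μ d₀ t s * μ s a * f s a|
      ≤ ∑ s, |∑ a, dseq P μ d₀ t s * μ s a * f s a| := Finset.abs_sum_le_sum_abs _ _
    _ ≤ ∑ s, ∑ a, |dseq P μ d₀ t s * μ s a * f s a| :=
        Finset.sum_le_sum fun s _ => Finset.abs_sum_le_sum_abs _ _
    _ ≤ ∑ s, ∑ a, |f s a| := by
        refine Finset.sum_le_sum fun s _ => Finset.sum_le_sum fun a _ => ?_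
        rw [abs_mul, abs_mul]
        have h1 : |dseq P μ d₀ t s| ≤ 1 := by
          rw [abs_of_nonneg (dseq_nonneg hP0 hμ0 hd0 t s)]
          exact dseq_le_one hP0 hP1 hμ0 hμ1 hd0 hd1 t s
        have h2 : |μ s a| ≤ 1 := by
          rw [abs_of_nonneg (hμ0 s a)]
          calc μ s a ≤ ∑ a', μ s a' :=
                Finset.single_le_sum (fun a' _ => hμ0 s a') (Finset.mem_univ a)
            _ = 1 := hμ1 s
        calc |dseq P μ d₀ t s| * |μ s a| * |f s a|
            ≤ 1 * |f s a| := mul_le_mul_of_nonneg_right (mul_le_one₀ h1 (abs_nonneg _) h2) (abs_nonneg _)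
          _ = |f s a| := one_mul _

lemma summable_series (hγ0 : 0 ≤ γ) (hγ1 : γ < 1)
    (hP0 : ∀ s a s', 0 ≤ P s a s') (hP1 : ∀ s a, ∑ s', P s a s' = 1)
    (hμ0 : ∀ s a, 0 ≤ μ s a) (hμ1 : ∀ s, ∑ a, μ s a = 1)
    (hd0 : ∀ s, 0 ≤ d₀ s) (hd1 : ∑ s, d₀ s = 1) (f : S → 𝒜 → ℝ) :
    Summable (fun t : ℕ => |γ ^ t * ∑ s, ∑ a, dseq P μ d₀ t s * μ s a * f s a|) := by
  have hg : Summable (fun t : ℕ => γ ^ t * ∑ s, ∑ a, |f s a|) :=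
    (summable_geometric_of_lt_one hγ0 hγ1).mul_right _
  refine Summable.of_nonneg_of_le (fun t => abs_nonneg _) (fun t => ?_) hg
  rw [abs_mul, abs_pow, abs_of_nonneg hγ0]
  exact mul_le_mul_of_nonneg_left (inner_abs_le hP0 hP1 hμ0 hμ1 hd0 hd1 f t)
    (pow_nonneg hγ0 t)

lemma summable_series' (hγ0 : 0 ≤ γ) (hγ1 : γ < 1)
    (hP0 : ∀ s a s', 0 ≤ P s a s') (hP1 : ∀ s a, ∑ s', P s a s' = 1)
    (hμ0 : ∀ s a, 0 ≤ μ s a) (hμ1 : ∀ s, ∑ a, μ s a = 1)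
    (hd0 : ∀ s, 0 ≤ d₀ s) (hd1 : ∑ s, d₀ s = 1) (f : S → 𝒜 → ℝ) :
    Summable (fun t : ℕ => γ ^ t * ∑ s, ∑ a, dseq P μ d₀ t s * μ s a * f s a) :=
  (summable_abs_iff).mp (summable_series hγ0 hγ1 hP0 hP1 hμ0 hμ1 hd0 hd1 f)

end Aux

section Aux2

variable [Fintype S] [Fintype 𝒜] [DecidableEq S]
variable {P : S → 𝒜 → S → ℝ} {μ : S → 𝒜 → ℝ} {d₀ : S → ℝ} {γ : ℝ}

lemma dirac_nonneg (s₀ : S) : ∀ s : S, (0:ℝ) ≤ if s = s₀ then 1 else 0 := by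
  intro s; split <;> norm_num

lemma dirac_sum_one (s₀ : S) : ∑ s : S, (if s = s₀ then (1:ℝ) else 0) = 1 := by
  simp

lemma dseq_linear (P : S → 𝒜 → S → ℝ) (μ : S → 𝒜 → ℝ) (d₀ : S → ℝ) : ∀ t s,
    dseq P μ d₀ t s
      = ∑ s₀, d₀ s₀ * dseq P μ (fun s' => if s' = s₀ then 1 else 0) t s := by
  intro t
  induction t with
  | zero =>
    intro s
    show d₀ s = ∑ s₀, d₀ s₀ * (if s = s₀ then 1 else 0)
    simp [mul_ite]
  | succ t ih =>
    intro s'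
    show ∑ s, ∑ a, dseq P μ d₀ t s * μ s a * P s a s' = _
    calc ∑ s, ∑ a, dseq P μ d₀ t s * μ s a * P s a s'
        = ∑ s, ∑ a, (∑ s₀, d₀ s₀ * dseq P μ (fun s'' => if s'' = s₀ then 1 else 0) t s)
            * μ s a * P s a s' := by
          refine Finset.sum_congr rfl fun s _ => Finset.sum_congr rfl fun a _ => ?_
          rw [ih]
      _ = ∑ s, ∑ a, ∑ s₀, d₀ s₀ *
            (dseq P μ (fun s'' => if s'' = s₀ then 1 else 0) t s * μ s a * P s a s') := by
          refine Finset.sum_congr rfl fun s _ => Finset.sum_congr rfl fun a _ => ?_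
          rw [Finset.sum_mul, Finset.sum_mul]
          exact Finset.sum_congr rfl fun s₀ _ => by ring
      _ = ∑ s₀, ∑ s, ∑ a, d₀ s₀ *
            (dseq P μ (fun s'' => if s'' = s₀ then 1 else 0) t s * μ s a * P s a s') := by
          rw [show (∑ s, ∑ a, ∑ s₀, d₀ s₀ * (dseq P μ (fun s'' => if s'' = s₀ then 1 else 0) t s * μ s a * P s a s')) = ∑ s, ∑ s₀, ∑ a, d₀ s₀ * (dseq P μ (fun s'' => if s'' = s₀ then 1 else 0) t s * μ s a * P s a s') from Finset.sum_congr rfl fun s _ => Finset.sum_comm]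
          exact Finset.sum_comm
      _ = ∑ s₀, d₀ s₀ * dseq P μ (fun s'' => if s'' = s₀ then 1 else 0) (t+1) s' := by
          refine Finset.sum_congr rfl fun s₀ _ => ?_
          show _ = d₀ s₀ * ∑ s, ∑ a, _
          rw [Finset.mul_sum]
          exact Finset.sum_congr rfl fun s _ => (Finset.mul_sum _ _ _).symm

lemma Jret_eq_sum_V (hγ0 : 0 ≤ γ) (hγ1 : γ < 1)
    (hP0 : ∀ s a s', 0 ≤ P s a s') (hP1 : ∀ s a, ∑ s', P s a s' = 1)
    (hμ0 : ∀ s a, 0 ≤ μ s a) (hμ1 : ∀ s, ∑ a, μ s a = 1)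
    (r : S → 𝒜 → ℝ) (d₀ : S → ℝ) :
    Jret P r γ μ d₀ = ∑ s₀, d₀ s₀ * Vfun P r γ μ s₀ := by
  unfold Jret Vfun Jret
  calc (∑' t : ℕ, γ ^ t * ∑ s, ∑ a, dseq P μ d₀ t s * μ s a * r s a)
      = ∑' t : ℕ, ∑ s₀, d₀ s₀ *
          (γ ^ t * ∑ s, ∑ a, dseq P μ (fun s' => if s' = s₀ then 1 else 0) t s * μ s a * r s a) := by
        refine tsum_congr fun t => ?_
        calc γ ^ t * ∑ s, ∑ a, dseq P μ d₀ t s * μ s a * r s a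
            = γ ^ t * ∑ s, ∑ a, (∑ s₀, d₀ s₀ * dseq P μ (fun s' => if s' = s₀ then 1 else 0) t s) * μ s a * r s a := by
              rw [show (fun s => ∑ a, dseq P μ d₀ t s * μ s a * r s a) = fun s => ∑ a, (∑ s₀, d₀ s₀ * dseq P μ (fun s' => if s' = s₀ then 1 else 0) t s) * μ s a * r s a from funext fun s => by rw [← dseq_linear]] 
          _ = ∑ s₀, γ ^ t * ∑ s, ∑ a, d₀ s₀ * (dseq P μ (fun s' => if s' = s₀ then 1 else 0) t s * μ s a * r s a) := by
              rw [← Finset.mul_sum]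
              congr 1
              calc ∑ s, ∑ a, (∑ s₀, d₀ s₀ * dseq P μ (fun s' => if s' = s₀ then 1 else 0) t s) * μ s a * r s a
                  = ∑ s, ∑ a, ∑ s₀, d₀ s₀ * (dseq P μ (fun s' => if s' = s₀ then 1 else 0) t s * μ s a * r s a) := by
                    refine Finset.sum_congr rfl fun s _ => Finset.sum_congr rfl fun a _ => ?_
                    rw [Finset.sum_mul, Finset.sum_mul]
                    exact Finset.sum_congr rfl fun s₀ _ => by ring
                _ = ∑ s, ∑ s₀, ∑ a, d₀ s₀ * (dseq P μ (fun s' => if s' = s₀ then 1 else 0) t s * μ s a * r s a) :=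
                    Finset.sum_congr rfl fun s _ => Finset.sum_comm
                _ = ∑ s₀, ∑ s, ∑ a, d₀ s₀ * (dseq P μ (fun s' => if s' = s₀ then 1 else 0) t s * μ s a * r s a) :=
                    Finset.sum_comm
          _ = ∑ s₀, d₀ s₀ * (γ ^ t * ∑ s, ∑ a, dseq P μ (fun s' => if s' = s₀ then 1 else 0) t s * μ s a * r s a) := by
              refine Finset.sum_congr rfl fun s₀ _ => ?_
              simp only [Finset.mul_sum]
              exact Finset.sum_congr rfl fun s _ => Finset.sum_congr rfl fun a _ => by ring
    _ = ∑ s₀, d₀ s₀ * ∑' t : ℕ, γ ^ t * ∑ s, ∑ a, dseq P μ (fun s' => if s' = s₀ then 1 else 0) t s * μ s a * r s a := by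
        rw [Summable.tsum_finsetSum]
        · exact Finset.sum_congr rfl fun s₀ _ => tsum_mul_left
        · intro s₀ _
          exact Summable.mul_left _
            (summable_series' hγ0 hγ1 hP0 hP1 hμ0 hμ1 (dirac_nonneg s₀) (dirac_sum_one s₀) r)

end Aux2

section Aux3

variable [Fintype S] [Fintype 𝒜] [DecidableEq S]
variable {P : S → 𝒜 → S → ℝ} {μ μb : S → 𝒜 → ℝ} {d₀ : S → ℝ} {γ : ℝ}

lemma telescope (r : S → 𝒜 → ℝ) (hμb1 : ∀ s, ∑ a, μb s a = 1) (t : ℕ) :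
    γ ^ t * ∑ s, ∑ a, dseq P μb d₀ t s * μb s a * Adv P r γ μ s a
      = γ ^ t * (∑ s, ∑ a, dseq P μb d₀ t s * μb s a * r s a)
        + (γ ^ (t+1) * ∑ s, dseq P μb d₀ (t+1) s * Vfun P r γ μ s
           - γ ^ t * ∑ s, dseq P μb d₀ t s * Vfun P r γ μ s) := by
  have key : ∀ s a, dseq P μb d₀ t s * μb s a * Adv P r γ μ s a
      = dseq P μb d₀ t s * μb s a * r s a
        + γ * (∑ s', dseq P μb d₀ t s * μb s a * P s a s' * Vfun P r γ μ s')
        - dseq P μb d₀ t s * μb s a * Vfun P r γ μ s := by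
    intro s a
    have h : (∑ s', dseq P μb d₀ t s * μb s a * P s a s' * Vfun P r γ μ s')
        = dseq P μb d₀ t s * μb s a * ∑ s', P s a s' * Vfun P r γ μ s' := by
      rw [Finset.mul_sum]
      exact Finset.sum_congr rfl fun s' _ => by ring
    rw [h]
    show _ * (Qfun P r γ μ s a - Vfun P r γ μ s) = _
    show _ * (r s a + γ * ∑ s', P s a s' * Vfun P r γ μ s' - Vfun P r γ μ s) = _
    ring
  have h1 : ∑ s, ∑ a, dseq P μb d₀ t s * μb s a * Adv P r γ μ s a
      = (∑ s, ∑ a, dseq P μb d₀ t s * μb s a * r s a)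
        + γ * (∑ s', dseq P μb d₀ (t+1) s' * Vfun P r γ μ s')
        - ∑ s, dseq P μb d₀ t s * Vfun P r γ μ s := by
    have e2 : (∑ s, ∑ a, ∑ s', dseq P μb d₀ t s * μb s a * P s a s' * Vfun P r γ μ s')
        = ∑ s', dseq P μb d₀ (t+1) s' * Vfun P r γ μ s' := by
      calc (∑ s, ∑ a, ∑ s', dseq P μb d₀ t s * μb s a * P s a s' * Vfun P r γ μ s')
          = ∑ s, ∑ s', ∑ a, dseq P μb d₀ t s * μb s a * P s a s' * Vfun P r γ μ s' :=
            Finset.sum_congr rfl fun s _ => Finset.sum_comm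
        _ = ∑ s', ∑ s, ∑ a, dseq P μb d₀ t s * μb s a * P s a s' * Vfun P r γ μ s' :=
            Finset.sum_comm
        _ = ∑ s', dseq P μb d₀ (t+1) s' * Vfun P r γ μ s' := by
            refine Finset.sum_congr rfl fun s' _ => ?_
            show _ = (∑ s, ∑ a, dseq P μb d₀ t s * μb s a * P s a s') * Vfun P r γ μ s'
            rw [Finset.sum_mul]
            exact Finset.sum_congr rfl fun s _ => by rw [Finset.sum_mul]
    have e3 : (∑ s, ∑ a, dseq P μb d₀ t s * μb s a * Vfun P r γ μ s)
        = ∑ s, dseq P μb d₀ t s * Vfun P r γ μ s := by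
      refine Finset.sum_congr rfl fun s _ => ?_
      calc ∑ a, dseq P μb d₀ t s * μb s a * Vfun P r γ μ s
          = dseq P μb d₀ t s * Vfun P r γ μ s * ∑ a, μb s a := by
            rw [Finset.mul_sum]
            exact Finset.sum_congr rfl fun a _ => by ring
        _ = dseq P μb d₀ t s * Vfun P r γ μ s := by rw [hμb1, mul_one]
    calc ∑ s, ∑ a, dseq P μb d₀ t s * μb s a * Adv P r γ μ s a
        = ∑ s, ∑ a, (dseq P μb d₀ t s * μb s a * r s a
            + γ * (∑ s', dseq P μb d₀ t s * μb s a * P s a s' * Vfun P r γ μ s')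
            - dseq P μb d₀ t s * μb s a * Vfun P r γ μ s) := by
          exact Finset.sum_congr rfl fun s _ => Finset.sum_congr rfl fun a _ => key s a
      _ = (∑ s, ∑ a, dseq P μb d₀ t s * μb s a * r s a)
            + γ * (∑ s, ∑ a, ∑ s', dseq P μb d₀ t s * μb s a * P s a s' * Vfun P r γ μ s')
            - ∑ s, ∑ a, dseq P μb d₀ t s * μb s a * Vfun P r γ μ s := by
          simp only [Finset.sum_add_distrib, Finset.sum_sub_distrib, Finset.mul_sum]
      _ = _ := by rw [e2, e3]
  rw [h1]
  rw [pow_succ]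
  ring

end Aux3

/-- (Performance difference) `J(μ̄) = J(μ) + ∑_t γ^t ∑_{s,a} d^{μ̄}_t(s) μ̄(s,a) A_μ(s,a)`,
and the series on the right converges absolutely. -/
theorem performance_difference
    [Fintype S] [Fintype 𝒜] [Nonempty S] [Nonempty 𝒜] [DecidableEq S]
    (P : S → 𝒜 → S → ℝ) (r : S → 𝒜 → ℝ) (γ : ℝ)
    (hγ0 : 0 ≤ γ) (hγ1 : γ < 1)
    (hP0 : ∀ s a s', 0 ≤ P s a s') (hP1 : ∀ s a, ∑ s', P s a s' = 1)
    (d₀ : S → ℝ) (hd0 : ∀ s, 0 ≤ d₀ s) (hd1 : ∑ s, d₀ s = 1)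
    (μ μb : S → 𝒜 → ℝ)
    (hμ0 : ∀ s a, 0 ≤ μ s a) (hμ1 : ∀ s, ∑ a, μ s a = 1)
    (hμb0 : ∀ s a, 0 ≤ μb s a) (hμb1 : ∀ s, ∑ a, μb s a = 1) :
    (Summable fun t : ℕ =>
        |γ ^ t * ∑ s, ∑ a, dseq P μb d₀ t s * μb s a * Adv P r γ μ s a|) ∧
    Jret P r γ μb d₀ = Jret P r γ μ d₀ +
      ∑' t : ℕ, γ ^ t * ∑ s, ∑ a, dseq P μb d₀ t s * μb s a * Adv P r γ μ s a := by
  have habs : Summable fun t : ℕ =>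
      |γ ^ t * ∑ s, ∑ a, dseq P μb d₀ t s * μb s a * Adv P r γ μ s a| :=
    summable_series hγ0 hγ1 hP0 hP1 hμb0 hμb1 hd0 hd1 (Adv P r γ μ)
  refine ⟨habs, ?_⟩
  set c : ℕ → ℝ := fun t => γ ^ t * ∑ s, ∑ a, dseq P μb d₀ t s * μb s a * Adv P r γ μ s a
    with hc_def
  set b : ℕ → ℝ := fun t => γ ^ t * ∑ s, ∑ a, dseq P μb d₀ t s * μb s a * r s a with hb_def
  set g : ℕ → ℝ := fun t => γ ^ t * ∑ s, dseq P μb d₀ t s * Vfun P r γ μ s with hg_def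
  have hc : Summable c := summable_abs_iff.mp habs
  have hb : Summable b := summable_series' hγ0 hγ1 hP0 hP1 hμb0 hμb1 hd0 hd1 r
  have htel : ∀ t, c t = b t + (g (t + 1) - g t) := fun t => telescope r hμb1 t
  have hpartial : ∀ T, ∑ t ∈ Finset.range T, c t
      = (∑ t ∈ Finset.range T, b t) + (g T - g 0) := by
    intro T
    simp only [htel]
    rw [Finset.sum_add_distrib, Finset.sum_range_sub]
  -- g tends to 0
  have hgbound : ∀ T, |g T| ≤ γ ^ T * ∑ s, |Vfun P r γ μ s| := by
    intro T
    rw [hg_def]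
    rw [abs_mul, abs_pow, abs_of_nonneg hγ0]
    refine mul_le_mul_of_nonneg_left ?_ (pow_nonneg hγ0 T)
    calc |∑ s, dseq P μb d₀ T s * Vfun P r γ μ s|
        ≤ ∑ s, |dseq P μb d₀ T s * Vfun P r γ μ s| := Finset.abs_sum_le_sum_abs _ _
      _ ≤ ∑ s, |Vfun P r γ μ s| := by
          refine Finset.sum_le_sum fun s _ => ?_
          rw [abs_mul]
          have h1 : |dseq P μb d₀ T s| ≤ 1 := by
            rw [abs_of_nonneg (dseq_nonneg hP0 hμb0 hd0 T s)]
            exact dseq_le_one hP0 hP1 hμb0 hμb1 hd0 hd1 T s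
          calc |dseq P μb d₀ T s| * |Vfun P r γ μ s|
              ≤ 1 * |Vfun P r γ μ s| := mul_le_mul_of_nonneg_right h1 (abs_nonneg _)
            _ = |Vfun P r γ μ s| := one_mul _
  have hg0 : Filter.Tendsto g Filter.atTop (nhds 0) := by
    refine squeeze_zero_norm hgbound ?_
    have := (tendsto_pow_atTop_nhds_zero_of_lt_one hγ0 hγ1).mul_const
      (∑ s, |Vfun P r γ μ s|)
    simpa using this
  have hlim1 : Filter.Tendsto (fun T => ∑ t ∈ Finset.range T, c t) Filter.atTop
      (nhds ((∑' t, b t) + (0 - g 0))) := by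
    have h2 : Filter.Tendsto (fun T => g T - g 0) Filter.atTop (nhds (0 - g 0)) :=
      hg0.sub_const (g 0)
    have h1 := hb.hasSum.tendsto_sum_nat
    have := h1.add h2
    refine this.congr fun T => (hpartial T).symm
  have hlim2 : Filter.Tendsto (fun T => ∑ t ∈ Finset.range T, c t) Filter.atTop
      (nhds (∑' t, c t)) := hc.hasSum.tendsto_sum_nat
  have heq : (∑' t, c t) = (∑' t, b t) + (0 - g 0) := tendsto_nhds_unique hlim2 hlim1
  have hg0eq : g 0 = Jret P r γ μ d₀ := by
    rw [hg_def]
    simp only [pow_zero, one_mul]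
    rw [Jret_eq_sum_V hγ0 hγ1 hP0 hP1 hμ0 hμ1 r d₀]
    rfl
  have hJb : Jret P r γ μb d₀ = ∑' t, b t := rfl
  rw [hJb, ← hg0eq]
  rw [heq]
  ring

end
end
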